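/- arXiv:2002.01990 — 7 statements merged into one kernel-verified Lean document; each statement's English description precedes it below -/
import Mathlib

section
/- Let n ≥ 1, let h be a Hermitian matrix in Matrix (Fin n) (Fin n) ℂ, and let P be a Hermitian idempotent matrix with h·P = P·h. Suppose there are real numbers a < b with gap g = b - a > 0 such that ⟨x, h x⟩ ≤ a·‖x‖² for every x in the range of P and ⟨x, h x⟩ ≥ b·‖x‖² for every x in the kernel of P. Then for every matrix A that is off-diagonal with respect to P there exists a unique matrix B that is off-diagonal with respect to P and satisfies h·B - B·h = A; moreover ‖B‖ ≤ ‖A‖/g in the ℓ²-operator norm. -/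
/-!
Put `J = 2P - 1`, a self-adjoint unitary commuting with `h`, and `k = (a + b)/2 - h`. The gap
makes `K = J k` coercive, `re ⟪x, K x⟫ ≥ (b - a)/2 ‖x‖²`, and an off-diagonal `X` anticommutes
with `J`, so `K X + X K = J ⁅k, X⁆ = -J ⁅h, X⁆`. Pairing `K X + X K` with a top singular vector
`X⋆X v = ‖X‖² v` gives the Heinz-type bound `2δ ‖X‖ ≤ ‖K X + X K‖` for `re K ≥ δ`, hence
`(b - a) ‖X‖ ≤ ‖⁅h, X⁆‖`. The Liouvillian `⁅h, ·⁆` preserves the finite-dimensional space of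
off-diagonal matrices and is injective on it by this bound, so it is bijective there.
-/

open scoped Matrix.Norms.L2Operator InnerProductSpace
open RCLike

theorem Commute.mul_lie_mul {R : Type*} [Ring R] {h M : R} (hM : Commute h M) (X : R) :
    M * ⁅h, X⁆ * M = ⁅h, M * X * M⁆ := by
  simp only [Ring.lie_def, mul_sub, sub_mul, mul_assoc, hM.eq, hM.left_comm]

section OffDiagonal

variable (𝕜 : Type*) {R : Type*} [CommSemiring 𝕜] [Ring R] [Algebra 𝕜 R]

def offDiagonal (P : R) : Submodule 𝕜 R where
  carrier := {X | P * X * P = 0 ∧ (1 - P) * X * (1 - P) = 0}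
  add_mem' := by
    rintro X Y ⟨hX₁, hX₂⟩ ⟨hY₁, hY₂⟩
    simp only [Set.mem_ofPred_eq, mul_add, add_mul, hX₁, hX₂, hY₁, hY₂, add_zero, and_self]
  zero_mem' := by simp
  smul_mem' := by
    rintro c X ⟨hX₁, hX₂⟩
    simp only [Set.mem_ofPred_eq, mul_smul_comm, smul_mul_assoc, hX₁, hX₂, smul_zero, and_self]

variable {𝕜} {h P X : R}

theorem mem_offDiagonal : X ∈ offDiagonal 𝕜 P ↔ P * X * P = 0 ∧ (1 - P) * X * (1 - P) = 0 :=
  Iff.rfl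

theorem lie_mem_offDiagonal (hc : Commute h P) (hX : X ∈ offDiagonal 𝕜 P) :
    ⁅h, X⁆ ∈ offDiagonal 𝕜 P := by
  constructor
  · rw [hc.mul_lie_mul, hX.1, Ring.lie_def, mul_zero, zero_mul, sub_zero]
  · rw [((Commute.one_right h).sub_right hc).mul_lie_mul, hX.2, Ring.lie_def, mul_zero, zero_mul,
      sub_zero]

theorem map_mem_offDiagonal {S F : Type*} [Ring S] [Algebra 𝕜 S] [FunLike F R S]
    [RingHomClass F R S] (f : F) (hX : X ∈ offDiagonal 𝕜 P) : f X ∈ offDiagonal 𝕜 (f P) := by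
  simp only [mem_offDiagonal, ← map_one f, ← map_sub, ← map_mul, hX.1, hX.2, map_zero, and_self]

theorem mul_add_mul_eq_of_mem_offDiagonal (hX : X ∈ offDiagonal 𝕜 P) : P * X + X * P = X := by
  have e : (1 - P) * X * (1 - P) = X - (P * X + X * P) + P * X * P := by noncomm_ring
  rw [hX.1, hX.2, add_zero, eq_comm, sub_eq_zero] at e
  exact e.symm

theorem mul_add_mul_eq_mul_lie_of_mem_offDiagonal (k : R) (hX : X ∈ offDiagonal 𝕜 P) :
    (2 * P - 1) * k * X + X * ((2 * P - 1) * k) = (2 * P - 1) * ⁅k, X⁆ := by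
  have hXP : X * P = X - P * X := eq_sub_of_add_eq' (mul_add_mul_eq_of_mem_offDiagonal hX)
  have hXJ : X * (2 * P - 1) = -((2 * P - 1) * X) :=
    calc X * (2 * P - 1) = 2 * (X * P) - X := by noncomm_ring
      _ = -((2 * P - 1) * X) := by rw [hXP]; noncomm_ring
  rw [← mul_assoc, hXJ, Ring.lie_def]
  noncomm_ring

end OffDiagonal

theorem exists_lie_eq_of_injOn {𝕜 R : Type*} [Field 𝕜] [Ring R] [Algebra 𝕜 R]
    [FiniteDimensional 𝕜 R] {h P A : R} (hc : Commute h P)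
    (hinj : Set.InjOn (⁅h, ·⁆) (offDiagonal 𝕜 P : Set R)) (hA : A ∈ offDiagonal 𝕜 P) :
    ∃ B ∈ offDiagonal 𝕜 P, ⁅h, B⁆ = A := by
  let L : offDiagonal 𝕜 P →ₗ[𝕜] offDiagonal 𝕜 P :=
    (LinearMap.mulLeft 𝕜 h - LinearMap.mulRight 𝕜 h).restrict fun _ ↦ lie_mem_offDiagonal hc
  have hL : ∀ X, (L X : R) = ⁅h, (X : R)⁆ := fun _ ↦ rfl
  have hLinj : Function.Injective L := fun X Y e ↦
    Subtype.ext <| hinj X.2 Y.2 <| by simpa only [hL] using congr($e.1)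
  obtain ⟨B, hB⟩ := LinearMap.injective_iff_surjective.mp hLinj ⟨A, hA⟩
  exact ⟨B, B.2, by simpa only [hL] using congr($hB.1)⟩

theorem injOn_lie_of_mul_norm_le {𝕜 R : Type*} [CommRing 𝕜] [NormedRing R] [Algebra 𝕜 R]
    {h : R} {S : Submodule 𝕜 R} {g : ℝ} (hg : 0 < g) (hS : ∀ X ∈ S, g * ‖X‖ ≤ ‖⁅h, X⁆‖) :
    Set.InjOn (⁅h, ·⁆) (S : Set R) := by
  intro X hX Y hY hXY
  have hlie : ⁅h, X - Y⁆ = 0 := by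
    simp only [Ring.lie_def] at hXY ⊢
    rw [mul_sub, sub_mul, sub_sub_sub_comm, hXY, sub_self]
  have := hS (X - Y) (S.sub_mem hX hY)
  rw [hlie, norm_zero, ← mul_zero g] at this
  exact sub_eq_zero.mp (norm_le_zero_iff.mp (le_of_mul_le_mul_left this hg))

namespace ContinuousLinearMap

variable {E : Type*} [NormedAddCommGroup E] [InnerProductSpace ℂ E]

section CompleteSpace

variable [CompleteSpace E]

theorem le_re_inner_two_mul_sub_one_mul_apply {P k : E →L[ℂ] E} {δ : ℝ} (hP : IsStarProjection P)
    (hk : Commute k P) (hrange : ∀ x, P x = x → δ * ‖x‖ ^ 2 ≤ re ⟪x, k x⟫_ℂ)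
    (hker : ∀ x, P x = 0 → re ⟪x, k x⟫_ℂ ≤ -(δ * ‖x‖ ^ 2)) (x : E) :
    δ * ‖x‖ ^ 2 ≤ re ⟪x, ((2 * P - 1) * k) x⟫_ℂ := by
  have hPsymm : ∀ u v, ⟪P u, v⟫_ℂ = ⟪u, P v⟫_ℂ := hP.isSelfAdjoint.isSymmetric
  set y := P x
  set z := x - P x
  have hPy : P y = y := by rw [← mul_apply_eq_comp, hP.isIdempotentElem.eq]
  have hPz : P z = 0 := by rw [map_sub, hPy, sub_self]
  have hx : x = y + z := (add_sub_cancel _ _).symm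
  have hyz : ⟪y, z⟫_ℂ = 0 := by rw [← hPy, hPsymm, hPz, inner_zero_right]
  have hyk : ⟪y, k z⟫_ℂ = 0 := by
    rw [← hPy, hPsymm, ← mul_apply_eq_comp, ← hk.eq, mul_apply_eq_comp, hPz, map_zero,
      inner_zero_right]
  have hzk : ⟪z, k y⟫_ℂ = 0 := by
    rw [← hPy, ← mul_apply_eq_comp, hk.eq, mul_apply_eq_comp, ← hPsymm, hPz, inner_zero_left]
  have hJx : ((2 * P - 1) * k) x = k y - k z := by
    have hPk : P (k x) = k y := by rw [← mul_apply_eq_comp, ← hk.eq, mul_apply_eq_comp]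
    rw [sub_mul, one_mul, sub_apply, mul_assoc, two_mul, add_apply, mul_apply_eq_comp, hPk, hx,
      map_add]
    abel
  have hpyth : ‖x‖ ^ 2 = ‖y‖ ^ 2 + ‖z‖ ^ 2 := by
    simpa only [← hx, sq] using norm_add_sq_eq_norm_sq_add_norm_sq_of_inner_eq_zero _ _ hyz
  have hinner : ⟪x, ((2 * P - 1) * k) x⟫_ℂ = ⟪y, k y⟫_ℂ - ⟪z, k z⟫_ℂ := by
    rw [hJx, hx, inner_add_left, inner_sub_right, inner_sub_right, hyk, hzk]
    ring
  rw [hinner, map_sub, hpyth]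
  linarith [hrange y hPy, hker z hPz]

end CompleteSpace

section FiniteDimensional

variable [FiniteDimensional ℂ E]

theorem exists_star_mul_self_apply_eq [Nontrivial E] (X : E →L[ℂ] E) :
    ∃ v ≠ 0, (star X * X) v = ((‖X‖ ^ 2 : ℝ) : ℂ) • v := by
  have hspec := spectrum.algebraMap_mem ℂ
    (CStarAlgebra.norm_mem_spectrum_of_nonneg (star_mul_self_nonneg X))
  rw [spectrum_eq, ← Module.End.hasEigenvalue_iff_mem_spectrum, CStarRing.norm_star_mul_self,
    ← sq] at hspec
  obtain ⟨v, hv⟩ := hspec.exists_hasEigenvector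
  exact ⟨v, hv.2, hv.apply_eq_smul⟩

theorem two_mul_mul_norm_le_norm_mul_add_mul (K X : E →L[ℂ] E) {δ : ℝ}
    (hK : ∀ x, δ * ‖x‖ ^ 2 ≤ re ⟪x, K x⟫_ℂ) : 2 * δ * ‖X‖ ≤ ‖K * X + X * K‖ := by
  rcases subsingleton_or_nontrivial E with hE | hE
  · simp [Subsingleton.elim X 0]
  obtain ⟨v, hv, hXv⟩ := exists_star_mul_self_apply_eq X
  set s := ‖X‖
  have hadj : ∀ u, re ⟪X v, X u⟫_ℂ = s ^ 2 * re ⟪v, u⟫_ℂ := by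
    intro u
    rw [← adjoint_inner_left, ← star_eq_adjoint, ← mul_apply_eq_comp, hXv, inner_smul_left,
      Complex.conj_ofReal]
    exact Complex.re_ofReal_mul _ _
  have hw : ‖X v‖ ^ 2 = s ^ 2 * ‖v‖ ^ 2 := by
    rw [norm_sq_eq_re_inner (𝕜 := ℂ) (X v), norm_sq_eq_re_inner (𝕜 := ℂ) v, hadj]
  have hlow : 2 * δ * s ^ 2 * ‖v‖ ^ 2 ≤ re ⟪X v, (K * X + X * K) v⟫_ℂ := by
    rw [add_apply, mul_apply_eq_comp, mul_apply_eq_comp, inner_add_right, map_add, hadj]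
    have hKXv := hK (X v)
    rw [hw] at hKXv
    nlinarith [mul_le_mul_of_nonneg_left (hK v) (sq_nonneg s)]
  have hup : re ⟪X v, (K * X + X * K) v⟫_ℂ ≤ s * ‖v‖ * (‖K * X + X * K‖ * ‖v‖) :=
    (re_inner_le_norm _ _).trans <| mul_le_mul (le_opNorm X v) (le_opNorm _ v) (norm_nonneg _)
      (by positivity)
  rcases (norm_nonneg X).eq_or_lt with hs | hs
  · rw [show s = 0 from hs.symm, mul_zero]
    exact norm_nonneg _
  · have : 0 < s * ‖v‖ ^ 2 := by positivity
    nlinarith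

theorem sub_mul_norm_le_norm_lie {h P X : E →L[ℂ] E} {a b : ℝ} (hP : IsStarProjection P)
    (hc : Commute h P) (hrange : ∀ x, P x = x → re ⟪x, h x⟫_ℂ ≤ a * ‖x‖ ^ 2)
    (hker : ∀ x, P x = 0 → b * ‖x‖ ^ 2 ≤ re ⟪x, h x⟫_ℂ) (hX : X ∈ offDiagonal ℂ P) :
    (b - a) * ‖X‖ ≤ ‖⁅h, X⁆‖ := by
  set c : ℂ := (((a + b) / 2 : ℝ) : ℂ)
  set k := c • 1 - h
  have hk : Commute k P := ((Commute.one_left P).smul_left c).sub_left hc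
  have hre : ∀ x, re ⟪x, k x⟫_ℂ = (a + b) / 2 * ‖x‖ ^ 2 - re ⟪x, h x⟫_ℂ := by
    intro x
    rw [sub_apply, inner_sub_right, map_sub, smul_apply, one_apply_eq_self, inner_smul_right,
      ← inner_self_eq_norm_sq (𝕜 := ℂ)]
    exact congr($(Complex.re_ofReal_mul _ _) - _)
  have hK := le_re_inner_two_mul_sub_one_mul_apply (δ := (b - a) / 2) hP hk
    (fun x hx ↦ by rw [hre]; linarith [hrange x hx]) (fun x hx ↦ by rw [hre]; linarith [hker x hx])
  have hkX : ⁅k, X⁆ = -⁅h, X⁆ := by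
    simp only [k, Ring.lie_def, sub_mul, mul_sub, smul_mul_assoc, mul_smul_comm, one_mul, mul_one]
    abel
  have := two_mul_mul_norm_le_norm_mul_add_mul _ X hK
  rw [mul_add_mul_eq_mul_lie_of_mem_offDiagonal k hX, CStarRing.norm_mem_unitary_mul _
    hP.two_mul_sub_one_mem_unitary, hkX, norm_neg] at this
  linarith

end FiniteDimensional

end ContinuousLinearMap

namespace Matrix

variable {n : Type*} [Fintype n] [DecidableEq n]

theorem inner_toEuclideanCLM_toLp (M : Matrix n n ℂ) (x : n → ℂ) :
    ⟪WithLp.toLp 2 x, toEuclideanCLM (𝕜 := ℂ) M (WithLp.toLp 2 x)⟫_ℂ = star x ⬝ᵥ (M *ᵥ x) := by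
  rw [toEuclideanCLM_toLp, EuclideanSpace.inner_eq_star_dotProduct, dotProduct_comm]

theorem sub_mul_norm_le_norm_lie {h P X : Matrix n n ℂ} {a b : ℝ} (hP : IsStarProjection P)
    (hc : Commute h P)
    (hrange : ∀ x : n → ℂ, P *ᵥ x = x → (star x ⬝ᵥ (h *ᵥ x)).re ≤ a * (star x ⬝ᵥ x).re)
    (hker : ∀ x : n → ℂ, P *ᵥ x = 0 → b * (star x ⬝ᵥ x).re ≤ (star x ⬝ᵥ (h *ᵥ x)).re)
    (hX : X ∈ offDiagonal ℂ P) : (b - a) * ‖X‖ ≤ ‖⁅h, X⁆‖ := by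
  have hnorm (x : n → ℂ) : ‖WithLp.toLp 2 x‖ ^ 2 = (star x ⬝ᵥ x).re := by
    rw [norm_sq_eq_re_inner (𝕜 := ℂ), EuclideanSpace.inner_eq_star_dotProduct, dotProduct_comm,
      re_to_complex]
  have := ContinuousLinearMap.sub_mul_norm_le_norm_lie (a := a) (b := b)
    (hP.map (toEuclideanCLM (𝕜 := ℂ) (n := n))) (hc.map toEuclideanCLM) ?_ ?_
    (map_mem_offDiagonal toEuclideanCLM hX)
  · rwa [Ring.lie_def, ← map_mul, ← map_mul, ← map_sub, ← Ring.lie_def, l2_opNorm_toEuclideanCLM,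
      l2_opNorm_toEuclideanCLM] at this
  · rintro ⟨x⟩ hx
    rw [toEuclideanCLM_toLp] at hx
    rw [inner_toEuclideanCLM_toLp, hnorm, re_to_complex]
    exact hrange x (WithLp.toLp_injective 2 hx)
  · rintro ⟨x⟩ hx
    rw [toEuclideanCLM_toLp] at hx
    rw [inner_toEuclideanCLM_toLp, hnorm, re_to_complex]
    exact hker x (WithLp.toLp_injective 2 (hx.trans (WithLp.toLp_zero 2).symm))

end Matrix

open Matrix

theorem stmt_3_general (n : ℕ) (h P : Matrix (Fin n) (Fin n) ℂ)
    (hPherm : P.IsHermitian) (hPidem : P * P = P)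
    (hcomm : h * P = P * h) (a b : ℝ) (hab : a < b)
    (hrange : ∀ x : Fin n → ℂ, P *ᵥ x = x →
      (star x ⬝ᵥ (h *ᵥ x)).re ≤ a * (star x ⬝ᵥ x).re)
    (hker : ∀ x : Fin n → ℂ, P *ᵥ x = 0 →
      b * (star x ⬝ᵥ x).re ≤ (star x ⬝ᵥ (h *ᵥ x)).re) :
    ∀ A : Matrix (Fin n) (Fin n) ℂ,
      P * A * P = 0 → (1 - P) * A * (1 - P) = 0 →
      ∃ B : Matrix (Fin n) (Fin n) ℂ,
        (P * B * P = 0 ∧ (1 - P) * B * (1 - P) = 0 ∧ h * B - B * h = A ∧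
          ‖B‖ ≤ ‖A‖ / (b - a)) ∧
        ∀ B' : Matrix (Fin n) (Fin n) ℂ,
          P * B' * P = 0 → (1 - P) * B' * (1 - P) = 0 → h * B' - B' * h = A → B' = B := by
  intro A hA₁ hA₂
  have hbound : ∀ X ∈ offDiagonal ℂ P, (b - a) * ‖X‖ ≤ ‖⁅h, X⁆‖ := fun X hX ↦
    sub_mul_norm_le_norm_lie ⟨hPidem, hPherm⟩ hcomm hrange hker hX
  have hinj := injOn_lie_of_mul_norm_le (sub_pos.2 hab) hbound
  obtain ⟨B, hB, rfl⟩ := exists_lie_eq_of_injOn hcomm hinj ⟨hA₁, hA₂⟩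
  refine ⟨B, ⟨hB.1, hB.2, rfl, ?_⟩, fun B' h₁ h₂ h₃ ↦ hinj ⟨h₁, h₂⟩ hB h₃⟩
  rw [le_div_iff₀' (sub_pos.2 hab)]
  exact hbound B hB

/-- Bounded invertibility of the Liouvillian `L_h(X) = h·X - X·h` on operators that are
off-diagonal with respect to a spectral projector `P` of `h` with spectral gap `g = b - a`,
with the partial inverse bounded in ℓ²-operator norm by `1/g`. -/
theorem stmt_3 (n : ℕ) (hn : 1 ≤ n) (h P : Matrix (Fin n) (Fin n) ℂ)
    (hh : h.IsHermitian) (hPherm : P.IsHermitian) (hPidem : P * P = P)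
    (hcomm : h * P = P * h) (a b : ℝ) (hab : a < b)
    (hrange : ∀ x : Fin n → ℂ, P *ᵥ x = x →
      (star x ⬝ᵥ (h *ᵥ x)).re ≤ a * (star x ⬝ᵥ x).re)
    (hker : ∀ x : Fin n → ℂ, P *ᵥ x = 0 →
      b * (star x ⬝ᵥ x).re ≤ (star x ⬝ᵥ (h *ᵥ x)).re) :
    ∀ A : Matrix (Fin n) (Fin n) ℂ,
      P * A * P = 0 → (1 - P) * A * (1 - P) = 0 →
      ∃ B : Matrix (Fin n) (Fin n) ℂ,
        (P * B * P = 0 ∧ (1 - P) * B * (1 - P) = 0 ∧ h * B - B * h = A ∧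
          ‖B‖ ≤ ‖A‖ / (b - a)) ∧
        ∀ B' : Matrix (Fin n) (Fin n) ℂ,
          P * B' * P = 0 → (1 - P) * B' * (1 - P) = 0 → h * B' - B' * h = A → B' = B :=
  stmt_3_general n h P hPherm hPidem hcomm a b hab hrange hker
end

section
/- Let 𝓗 be a complex Hilbert space, T > 0, and let P : [0, T] → (𝓗 →L[ℂ] 𝓗) be continuously differentiable with each P(s) an orthogonal projection (self-adjoint and idempotent). Let u, v : [0, T] → 𝓗 be differentiable with u'(s) = P'(s) u(s) and v'(s) = P'(s) v(s) for all s, and with P(0) u(0) = u(0) and P(0) v(0) = v(0). Then for every s ∈ [0, T]: P(s) u(s) = u(s) and ⟨u(s), v(s)⟩ = ⟨u(0), v(0)⟩. In particular, parallel transport by u̇ = Ṗ u maps an orthonormal family spanning the range of P(0) to an orthonormal family spanning the range of P(s). -/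
/-!
Differentiating `P² = P` gives `P' = P'P + PP'`, hence `PP'P = 0`. Then `w = Pu - u` satisfies the
linear equation `w' = PP'u = -PP'w` with `w(0) = 0`, so `w = 0` by Grönwall. For `u, v` in the
range of `P`, self-adjointness gives `⟨u, P'v⟩ = ⟨Pu, P'Pv⟩ = ⟨u, PP'Pv⟩ = 0`, and likewise
`⟨P'u, v⟩ = 0`, so `⟨u, v⟩` has zero derivative.
-/

open Set

theorem HasDerivWithinAt.mul_deriv_mul_eq_zero_of_isIdempotentElem {A : Type*} [NormedRing A]
    [NormedAlgebra ℝ A] {P : ℝ → A} {P' : A} {s : Set ℝ} {t : ℝ}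
    (hP : HasDerivWithinAt P P' s t) (hs : UniqueDiffWithinAt ℝ s t)
    (hidem : ∀ x ∈ s, IsIdempotentElem (P x)) (ht : t ∈ s) :
    P t * P' * P t = 0 := by
  have hP' : P' = P' * P t + P t * P' := hs.eq_deriv _ (hP.congr_of_mem hidem ht) (hP.mul hP)
  have hPt : P t * P t = P t := hidem t ht
  have : P t * P' * P t = P t * P' * P t + P t * P' * P t :=
    calc P t * P' * P t = P t * (P' * P t + P t * P') * P t := by rw [← hP']
      _ = P t * P' * (P t * P t) + (P t * P t) * P' * P t := by noncomm_ring
      _ = _ := by rw [hPt]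
  simpa using this

theorem HasDerivWithinAt.Ici_of_Icc {E : Type*} [NormedAddCommGroup E] [NormedSpace ℝ E]
    {f : ℝ → E} {f' : E} {a b x : ℝ} (h : HasDerivWithinAt f f' (Icc a b) x) (hx : x ∈ Ico a b) :
    HasDerivWithinAt f f' (Ici x) x :=
  h.mono_of_mem_nhdsWithin (Icc_mem_nhdsGE_of_mem hx)

theorem HasDerivWithinAt.clm_apply_of_restrictScalars {𝕜 E F : Type*} [NontriviallyNormedField 𝕜]
    [NormedAlgebra ℝ 𝕜] [NormedAddCommGroup E] [NormedSpace 𝕜 E] [NormedSpace ℝ E]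
    [IsScalarTower ℝ 𝕜 E] [NormedAddCommGroup F] [NormedSpace 𝕜 F] [NormedSpace ℝ F]
    [IsScalarTower ℝ 𝕜 F] {c : ℝ → E →L[𝕜] F} {c' : E →L[𝕜] F} {u : ℝ → E} {u' : E}
    {s : Set ℝ} {x : ℝ} (hc : HasDerivWithinAt c c' s x) (hu : HasDerivWithinAt u u' s x) :
    HasDerivWithinAt (fun y => c y (u y)) (c' (u x) + c x u') s x :=
  ((ContinuousLinearMap.restrictScalarsL 𝕜 E F ℝ ℝ).hasFDerivAt.comp_hasDerivWithinAt x hc).clm_apply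
    hu

theorem apply_eq_self_of_hasDerivWithinAt_deriv_apply {𝕜 E : Type*} [NontriviallyNormedField 𝕜]
    [NormedAlgebra ℝ 𝕜] [NormedAddCommGroup E] [NormedSpace 𝕜 E] [NormedSpace ℝ E]
    [IsScalarTower ℝ 𝕜 E] {P P' : ℝ → E →L[𝕜] E} {u : ℝ → E} {a b : ℝ}
    (hP : ∀ t ∈ Icc a b, HasDerivWithinAt P (P' t) (Icc a b) t)
    (hP' : ContinuousOn P' (Icc a b))
    (hPP'P : ∀ t ∈ Icc a b, P t * P' t * P t = 0)
    (hu : ∀ t ∈ Icc a b, HasDerivWithinAt u (P' t (u t)) (Icc a b) t)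
    (hua : P a (u a) = u a) :
    ∀ t ∈ Icc a b, P t (u t) = u t := by
  have hPcont : ContinuousOn P (Icc a b) := fun t ht => (hP t ht).continuousWithinAt
  obtain ⟨K, hK⟩ := isCompact_Icc.exists_bound_of_continuousOn (hPcont.mul hP')
  set w : ℝ → E := fun t => P t (u t) - u t
  have hw : ∀ t ∈ Icc a b, HasDerivWithinAt w (-((P t * P' t) (w t))) (Icc a b) t := by
    intro t ht
    refine (((hP t ht).clm_apply_of_restrictScalars (hu t ht)).sub (hu t ht)).congr_deriv ?_
    have hPP'Pu : P t (P' t (P t (u t))) = 0 := congr($(hPP'P t ht) (u t))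
    change _ = -(P t (P' t (P t (u t) - u t)))
    rw [add_sub_cancel_left, map_sub, map_sub, hPP'Pu, zero_sub, neg_neg]
  have hw_bound : ∀ t ∈ Ico a b, ‖-((P t * P' t) (w t))‖ ≤ K * ‖w t‖ := by
    intro t ht
    rw [norm_neg]
    exact ((P t * P' t).le_opNorm (w t)).trans
      (mul_le_mul_of_nonneg_right (hK t (Ico_subset_Icc_self ht)) (norm_nonneg _))
  have hw_zero := eq_zero_of_abs_deriv_le_mul_abs_self_of_eq_zero_right
    (fun t ht => (hw t ht).continuousWithinAt)
    (fun t ht => (hw t (Ico_subset_Icc_self ht)).Ici_of_Icc ht) (sub_eq_zero.mpr hua) hw_bound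
  exact fun t ht => sub_eq_zero.mp (hw_zero t ht)

theorem inner_apply_eq_zero_of_mul_mul_eq_zero {𝕜 E : Type*} [RCLike 𝕜] [NormedAddCommGroup E]
    [InnerProductSpace 𝕜 E] [CompleteSpace E] {P A : E →L[𝕜] E} (hP : IsSelfAdjoint P)
    (hPAP : P * A * P = 0) {x y : E} (hx : P x = x) (hy : P y = y) :
    inner 𝕜 x (A y) = 0 := by
  calc inner 𝕜 x (A y) = inner 𝕜 (P x) (A (P y)) := by rw [hx, hy]
    _ = inner 𝕜 x ((P * A * P) y) := hP.isSymmetric _ _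
    _ = 0 := by rw [hPAP, zero_apply, inner_zero_right]

/-- Parallel transport `u̇ = Ṗ u` along a C¹ family of orthogonal projections keeps vectors in
the range of `P(s)` and preserves inner products. -/
theorem stmt_7 {𝓗 : Type*} [NormedAddCommGroup 𝓗] [InnerProductSpace ℂ 𝓗] [CompleteSpace 𝓗]
    (T : ℝ) (hT : 0 < T)
    (P P' : ℝ → (𝓗 →L[ℂ] 𝓗))
    (hP : ∀ s ∈ Set.Icc (0:ℝ) T, HasDerivWithinAt P (P' s) (Set.Icc (0:ℝ) T) s)
    (hP'cont : ContinuousOn P' (Set.Icc (0:ℝ) T))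
    (hproj : ∀ s ∈ Set.Icc (0:ℝ) T, IsSelfAdjoint (P s) ∧ P s * P s = P s)
    (u v : ℝ → 𝓗)
    (hu : ∀ s ∈ Set.Icc (0:ℝ) T, HasDerivWithinAt u (P' s (u s)) (Set.Icc (0:ℝ) T) s)
    (hv : ∀ s ∈ Set.Icc (0:ℝ) T, HasDerivWithinAt v (P' s (v s)) (Set.Icc (0:ℝ) T) s)
    (hu0 : P 0 (u 0) = u 0) (hv0 : P 0 (v 0) = v 0) :
    ∀ s ∈ Set.Icc (0:ℝ) T,
      P s (u s) = u s ∧ (inner ℂ (u s) (v s) : ℂ) = inner ℂ (u 0) (v 0) := by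
  have hPP'P : ∀ s ∈ Icc 0 T, P s * P' s * P s = 0 := fun s hs =>
    (hP s hs).mul_deriv_mul_eq_zero_of_isIdempotentElem (uniqueDiffOn_Icc hT s hs)
      (fun t ht => (hproj t ht).2) hs
  have hu_range := apply_eq_self_of_hasDerivWithinAt_deriv_apply hP hP'cont hPP'P hu hu0
  have hv_range := apply_eq_self_of_hasDerivWithinAt_deriv_apply hP hP'cont hPP'P hv hv0
  have hinner : ∀ s ∈ Icc 0 T,
      HasDerivWithinAt (fun t => inner ℂ (u t) (v t)) (0 : ℂ) (Icc 0 T) s := by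
    intro s hs
    have hP'_orth {x y : 𝓗} (hx : P s x = x) (hy : P s y = y) : inner ℂ x (P' s y) = 0 :=
      inner_apply_eq_zero_of_mul_mul_eq_zero (hproj s hs).1 (hPP'P s hs) hx hy
    have h := (hu s hs).inner ℂ (hv s hs)
    rwa [hP'_orth (hu_range s hs) (hv_range s hs), ← inner_conj_symm,
      hP'_orth (hv_range s hs) (hu_range s hs), map_zero, add_zero] at h
  intro s hs
  exact ⟨hu_range s hs, constant_of_has_deriv_right_zero
    (fun t ht => (hinner t ht).continuousWithinAt)
    (fun t ht => (hinner t (Ico_subset_Icc_self ht)).Ici_of_Icc ht) s hs⟩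
end

section
/- Let n ≥ 1 and let P : ℝ → Matrix (Fin n) (Fin n) ℂ be differentiable at s₀ with P(s)² = P(s) for all s. Then the rank of P'(s₀) is at most 2 times the rank of P(s₀). -/
lemma matrix_rank_add_le {n : ℕ} (A B : Matrix (Fin n) (Fin n) ℂ) :
    (A + B).rank ≤ A.rank + B.rank := by
  unfold Matrix.rank
  rw [Matrix.mulVecLin_add]
  refine le_trans (Submodule.finrank_mono ?_) (Submodule.finrank_add_le_finrank_add_finrank _ _)
  intro x hx
  obtain ⟨y, rfl⟩ := hx
  exact Submodule.add_mem_sup ⟨y, rfl⟩ ⟨y, rfl⟩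

/-- The derivative of a differentiable family of idempotent matrices has rank at most twice
the rank of the idempotent. -/
theorem stmt_8 (n : ℕ) (hn : 1 ≤ n) (P : ℝ → Matrix (Fin n) (Fin n) ℂ)
    (P' : Matrix (Fin n) (Fin n) ℂ) (s₀ : ℝ)
    (hP : ∀ i j : Fin n, HasDerivAt (fun s => P s i j) (P' i j) s₀)
    (hidem : ∀ s : ℝ, P s * P s = P s) :
    P'.rank ≤ 2 * (P s₀).rank := by
  have key : P' = P' * P s₀ + P s₀ * P' := by
    ext i j
    have h1 : HasDerivAt (fun s => ∑ k, P s i k * P s k j)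
        (∑ k, (P' i k * P s₀ k j + P s₀ i k * P' k j)) s₀ :=
      HasDerivAt.fun_sum fun k _ => (hP i k).mul (hP k j)
    have h2 : (fun s => ∑ k, P s i k * P s k j) = fun s => P s i j := by
      funext s
      rw [show (∑ k, P s i k * P s k j) = (P s * P s) i j from (Matrix.mul_apply).symm, hidem]
    rw [h2] at h1
    have := h1.unique (hP i j)
    rw [Matrix.add_apply, Matrix.mul_apply, Matrix.mul_apply, ← this, Finset.sum_add_distrib]
  calc P'.rank ≤ (P' * P s₀).rank + (P s₀ * P').rank := by
        conv_lhs => rw [key]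
        exact matrix_rank_add_le _ _
    _ ≤ (P s₀).rank + (P s₀).rank :=
        add_le_add (Matrix.rank_mul_le_right _ _) (Matrix.rank_mul_le_left _ _)
    _ = 2 * (P s₀).rank := (two_mul _).symm
end

section
/- Let 𝓗 be a complex Hilbert space and ε > 0. Let H : ℝ → (𝓗 →L[ℂ] 𝓗) be continuous with each H(s) self-adjoint; let P, B : ℝ → (𝓗 →L[ℂ] 𝓗) be continuously differentiable with H(s)·P(s) = P(s)·H(s) and H(s)·B(s) - B(s)·H(s) = P'(s) for all s; let U : ℝ → (𝓗 →L[ℂ] 𝓗) be differentiable with U(0) = Id, U(t)*·U(t) = U(t)·U(t)* = Id for all t, and U'(t) = -i·H(ε·t)·U(t). Then for every t ≥ 0: U(t)·P(0)·U(t)* = P(ε·t) + i·ε·B(ε·t) - i·ε·U(t)·B(0)·U(t)* - i·ε² · ∫₀ᵗ U(t)·U(t')* · B'(ε·t') · U(t')·U(t)* dt'. -/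
/-!
Pass to the interaction picture: for `X(s) = P(εs) + iε B(εs)` the Heisenberg derivative of
`s ↦ U(s)* X(s) U(s)` is `U(s)* (X'(s) + i[H(εs), X(s)]) U(s)`. Since `[H, P] = 0` and
`[H, B] = P'`, the `P'` contributions cancel and this derivative is `iε² U(s)* B'(εs) U(s)`.
Integrating over `[0, t]` and conjugating back with `U(t)` gives the expansion.
-/

open Complex

theorem adiabatic_heisenberg_derivative {A : Type*} [Ring A] [Algebra ℂ A] {h P P' B B' : A}
    (ε : ℝ) (hcomm : h * P = P * h) (hLiou : h * B - B * h = P') :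
    ε • (P' + (I * ε) • B') + I • (h * (P + (I * ε) • B) - (P + (I * ε) • B) * h)
      = (I * (ε : ℂ) ^ 2) • B' := by
  have hX : h * (P + (I * ε) • B) - (P + (I * ε) • B) * h = (I * ε) • P' := by
    rw [← hLiou, mul_add, add_mul, hcomm, mul_smul_comm, smul_mul_assoc, smul_sub]
    abel
  have hI : I * (I * ε) = -ε := by rw [← mul_assoc, I_mul_I, neg_one_mul]
  rw [hX, smul_smul, hI, ← Complex.coe_smul]
  module

section InteractionPicture

variable {A : Type*} [NormedRing A] [NormedAlgebra ℂ A] [StarRing A] [ContinuousStar A]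

theorem HasDerivAt.star_mul_mul_of_schrodinger [StarModule ℂ A] {U X : ℝ → A} {h X' : A}
    {t : ℝ} (hU : HasDerivAt U (-I • (h * U t)) t) (hh : IsSelfAdjoint h)
    (hX : HasDerivAt X X' t) :
    HasDerivAt (fun s => star (U s) * X s * U s)
      (star (U t) * (X' + I • (h * X t - X t * h)) * U t) t := by
  have hUstar : HasDerivAt (fun s => star (U s)) (I • (star (U t) * h)) t := by
    simpa [star_smul, star_mul, hh.star_eq] using hU.star
  refine ((hUstar.mul hX).mul hU).congr_deriv ?_
  simp only [Pi.mul_apply, mul_add, add_mul, mul_sub, sub_mul, smul_mul_assoc, mul_smul_comm,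
    mul_assoc]
  module

theorem mul_mul_star_eq_sub_integral [CompleteSpace A] {U X D : ℝ → A}
    (hUc : Continuous U) (hDc : Continuous D)
    (hUXU : ∀ s, HasDerivAt (fun s => star (U s) * X s * U s) (star (U s) * D s * U s) s)
    (hU0 : U 0 = 1) {t : ℝ} (hUt : U t * star (U t) = 1) :
    U t * X 0 * star (U t)
      = X t - ∫ s in (0 : ℝ)..t, U t * star (U s) * D s * U s * star (U t) := by
  have hint : Continuous fun s => star (U s) * D s * U s := (hUc.star.mul hDc).mul hUc
  have hFTC := intervalIntegral.integral_eq_sub_of_hasDerivAt (fun s _ => hUXU s)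
    (hint.intervalIntegrable (μ := MeasureTheory.volume) 0 t)
  have hconj : ∀ Y, U t * (star (U t) * Y * U t) * star (U t) = Y := fun Y => by
    simp only [← mul_assoc, hUt, one_mul]
    rw [mul_assoc, hUt, mul_one]
  have hconj_integral :=
    (ContinuousLinearMap.mulLeftRight ℂ A (U t) (star (U t))).intervalIntegral_comp_comm
      (hint.intervalIntegrable (μ := MeasureTheory.volume) 0 t)
  simp only [ContinuousLinearMap.mulLeftRight_apply, ← mul_assoc] at hconj_integral
  rw [hconj_integral, hFTC]
  simp only [hU0, star_one, one_mul, mul_one, mul_sub, sub_mul, hconj]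
  exact (sub_sub_cancel _ _).symm

end InteractionPicture

theorem stmt_9_general {𝓗 : Type*} [NormedAddCommGroup 𝓗] [InnerProductSpace ℂ 𝓗] [CompleteSpace 𝓗]
    (ε : ℝ)
    (H P P' B B' U : ℝ → (𝓗 →L[ℂ] 𝓗))
    (hHsa : ∀ s : ℝ, IsSelfAdjoint (H s))
    (hP : ∀ s : ℝ, HasDerivAt P (P' s) s)
    (hB : ∀ s : ℝ, HasDerivAt B (B' s) s) (hB'cont : Continuous B')
    (hcomm : ∀ s : ℝ, H s * P s = P s * H s)
    (hLiou : ∀ s : ℝ, H s * B s - B s * H s = P' s)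
    (hU0 : U 0 = 1)
    (hUunitary : ∀ t : ℝ, ContinuousLinearMap.adjoint (U t) * U t = 1 ∧
      U t * ContinuousLinearMap.adjoint (U t) = 1)
    (hU : ∀ t : ℝ, HasDerivAt U (-Complex.I • (H (ε * t) * U t)) t) :
    ∀ t : ℝ, 0 ≤ t →
      U t * P 0 * ContinuousLinearMap.adjoint (U t)
        = P (ε * t) + (Complex.I * (ε : ℂ)) • B (ε * t)
          - (Complex.I * (ε : ℂ)) • (U t * B 0 * ContinuousLinearMap.adjoint (U t))
          - (Complex.I * (ε : ℂ) ^ 2) •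
              ∫ t' in (0:ℝ)..t,
                U t * ContinuousLinearMap.adjoint (U t') * B' (ε * t') * U t' *
                  ContinuousLinearMap.adjoint (U t) := by
  intro t _
  simp only [← ContinuousLinearMap.star_eq_adjoint] at hUunitary ⊢
  have hUc : Continuous U := continuous_iff_continuousAt.2 fun s => (hU s).continuousAt
  have hscale : ∀ {F F' : ℝ → (𝓗 →L[ℂ] 𝓗)}, (∀ s, HasDerivAt F (F' s) s) →
      ∀ s, HasDerivAt (fun s => F (ε * s)) (ε • F' (ε * s)) s := fun hF s => by
    simpa [Function.comp_def] using (hF (ε * s)).scomp s ((hasDerivAt_id s).const_mul ε)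
  have hUXU : ∀ s, HasDerivAt (fun s => star (U s) * (P (ε * s) + (I * ε) • B (ε * s)) * U s)
      (star (U s) * ((I * (ε : ℂ) ^ 2) • B' (ε * s)) * U s) s := fun s => by
    have hX : HasDerivAt (fun s => P (ε * s) + (I * ε) • B (ε * s))
        (ε • (P' (ε * s) + (I * ε) • B' (ε * s))) s := by
      rw [smul_add, smul_comm]
      exact (hscale hP s).add ((hscale hB s).const_smul (I * ε))
    simpa only [adiabatic_heisenberg_derivative ε (hcomm _) (hLiou _)]
      using (hU s).star_mul_mul_of_schrodinger (hHsa _) hX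
  have hDc : Continuous fun s => (I * (ε : ℂ) ^ 2) • B' (ε * s) := by fun_prop
  have hduhamel := mul_mul_star_eq_sub_integral hUc hDc hUXU hU0 (hUunitary t).2
  simp only [mul_zero, mul_add, add_mul, mul_smul_comm, smul_mul_assoc,
    intervalIntegral.integral_smul] at hduhamel
  linear_combination (norm := abel) hduhamel

/-- Exact adiabatic expansion with first-order corrections: if `U` is the propagator of the
time-scaled Hamiltonian `H(εt)`, `P(s)` commutes with `H(s)` and `[H(s), B(s)] = P'(s)`, then
`U(t) P(0) U(t)* = P(εt) + iε B(εt) - iε U(t) B(0) U(t)* - iε² ∫₀ᵗ U(t)U(t')* B'(εt') U(t')U(t)* dt'`. -/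
theorem stmt_9 {𝓗 : Type*} [NormedAddCommGroup 𝓗] [InnerProductSpace ℂ 𝓗] [CompleteSpace 𝓗]
    (ε : ℝ) (hε : 0 < ε)
    (H P P' B B' U : ℝ → (𝓗 →L[ℂ] 𝓗))
    (hHcont : Continuous H) (hHsa : ∀ s : ℝ, IsSelfAdjoint (H s))
    (hP : ∀ s : ℝ, HasDerivAt P (P' s) s) (hP'cont : Continuous P')
    (hB : ∀ s : ℝ, HasDerivAt B (B' s) s) (hB'cont : Continuous B')
    (hcomm : ∀ s : ℝ, H s * P s = P s * H s)
    (hLiou : ∀ s : ℝ, H s * B s - B s * H s = P' s)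
    (hU0 : U 0 = 1)
    (hUunitary : ∀ t : ℝ, ContinuousLinearMap.adjoint (U t) * U t = 1 ∧
      U t * ContinuousLinearMap.adjoint (U t) = 1)
    (hU : ∀ t : ℝ, HasDerivAt U (-Complex.I • (H (ε * t) * U t)) t) :
    ∀ t : ℝ, 0 ≤ t →
      U t * P 0 * ContinuousLinearMap.adjoint (U t)
        = P (ε * t) + (Complex.I * (ε : ℂ)) • B (ε * t)
          - (Complex.I * (ε : ℂ)) • (U t * B 0 * ContinuousLinearMap.adjoint (U t))
          - (Complex.I * (ε : ℂ) ^ 2) •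
              ∫ t' in (0:ℝ)..t,
                U t * ContinuousLinearMap.adjoint (U t') * B' (ε * t') * U t' *
                  ContinuousLinearMap.adjoint (U t) :=
  stmt_9_general ε H P P' B B' U hHsa hP hB hB'cont hcomm hLiou hU0 hUunitary hU
end

section
/- Let n ≥ 1, α ≥ 0, ε ≥ 0 and t₀ ∈ ℝ. Let H : ℝ → Matrix (Fin n) (Fin n) ℂ be continuously differentiable with each H(s) Hermitian and invertible, and with ‖H'(s)·H(s)⁻¹‖ ≤ α for all s. Let U : ℝ → Matrix (Fin n) (Fin n) ℂ be differentiable with U(t₀) = 1 and i·U'(t) = H(ε·t)·U(t) for all t. Then each U(t) is unitary, and for all t ≥ t₀, ‖H(ε·t)·U(t)·H(ε·t₀)⁻¹‖ ≤ exp(α·ε·(t - t₀)). -/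
open Matrix
open scoped Matrix.Norms.L2Operator InnerProductSpace

/-- Grönwall-type propagator bound: if `i·U̇(t) = H(εt)·U(t)`, `U(t₀) = 1`, each `H(s)` is
Hermitian and invertible with `‖H'(s)·H(s)⁻¹‖ ≤ α`, then each `U(t)` is unitary and
`‖H(εt)·U(t)·H(εt₀)⁻¹‖ ≤ exp(α·ε·(t - t₀))` for `t ≥ t₀` (ℓ²-operator norm). -/
theorem stmt_10 (n : ℕ) (hn : 1 ≤ n) (α ε : ℝ) (hα : 0 ≤ α) (hε : 0 ≤ ε) (t₀ : ℝ)
    (H H' U U' : ℝ → Matrix (Fin n) (Fin n) ℂ)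
    (hH : ∀ s : ℝ, HasDerivAt H (H' s) s) (hH'cont : Continuous H')
    (hHherm : ∀ s : ℝ, (H s).IsHermitian) (hHinv : ∀ s : ℝ, IsUnit (H s))
    (hbound : ∀ s : ℝ, ‖H' s * (H s)⁻¹‖ ≤ α)
    (hU0 : U t₀ = 1)
    (hU : ∀ t : ℝ, HasDerivAt U (U' t) t)
    (hSchrod : ∀ t : ℝ, Complex.I • U' t = H (ε * t) * U t) :
    (∀ t : ℝ, U t ∈ Matrix.unitaryGroup (Fin n) ℂ) ∧
    (∀ t : ℝ, t₀ ≤ t →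
      ‖H (ε * t) * U t * (H (ε * t₀))⁻¹‖ ≤ Real.exp (α * ε * (t - t₀))) := by
  classical
  have hU' : ∀ t, U' t = (-Complex.I) • (H (ε * t) * U t) := by
    intro t
    rw [← hSchrod t, smul_smul, neg_mul, Complex.I_mul_I, neg_neg, one_smul]
  have hstarH : ∀ s, star (H s) = H s := fun s => (hHherm s).eq
  -- unitarity
  have hconst : ∀ t, star (U t) * U t = 1 := by
    intro t
    have key : ∀ s : ℝ, HasDerivAt (fun r => star (U r) * U r)
        (star (U' s) * U s + star (U s) * U' s) s := fun s => ((hU s).star).mul (hU s)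
    have hzero : ∀ s : ℝ, star (U' s) * U s + star (U s) * U' s = 0 := by
      intro s
      rw [hU' s, star_smul, Matrix.star_mul, hstarH]
      simp only [star_neg, Complex.star_def, Complex.conj_I, neg_neg, smul_mul_assoc,
        mul_smul_comm, mul_assoc, neg_smul]
      simp only [mul_neg, mul_smul_comm, neg_smul, smul_neg]
      exact add_neg_cancel _
    have : (fun r => star (U r) * U r) t = (fun r => star (U r) * U r) t₀ :=
      is_const_of_deriv_eq_zero (fun s => ((key s).differentiableAt))
        (fun s => by rw [(key s).deriv, hzero]) t t₀
    simpa [hU0] using this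
  refine ⟨fun t => Matrix.mem_unitaryGroup_iff'.mpr (hconst t), ?_⟩
  intro t ht
  set c : ℝ := ε * α with hc
  have hc0 : 0 ≤ c := mul_nonneg hε hα
  have hdet : ∀ s : ℝ, IsUnit (H s).det := fun s => (Matrix.isUnit_iff_isUnit_det _).mp (hHinv s)
  -- derivative of s ↦ H (ε s)
  have hHε : ∀ s : ℝ, HasDerivAt (fun r => H (ε * r)) (ε • H' (ε * s)) s := by
    intro s
    have h1 : HasDerivAt (fun r : ℝ => ε * r) ε s := by
      simpa using (hasDerivAt_id s).const_mul ε
    have := HasDerivAt.scomp (𝕜 := ℝ) (x := s) (h := fun r : ℝ => ε * r) (hH (ε * s)) h1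
    exact this
  set V : ℝ → Matrix (Fin n) (Fin n) ℂ := fun s => H (ε * s) * U s with hVdef
  set A : ℝ → Matrix (Fin n) (Fin n) ℂ := fun s => ε • (H' (ε * s) * (H (ε * s))⁻¹) with hAdef
  have hAnorm : ∀ s, ‖A s‖ ≤ c := by
    intro s
    have : ‖A s‖ = ε * ‖H' (ε * s) * (H (ε * s))⁻¹‖ := by
      rw [hAdef]; rw [norm_smul, Real.norm_of_nonneg hε]
    rw [this, hc]
    exact mul_le_mul_of_nonneg_left (hbound _) hε
  have hV : ∀ s, HasDerivAt V (A s * V s + (-Complex.I) • (H (ε * s) * V s)) s := by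
    intro s
    have h0 := (hHε s).mul (hU s)
    have e1 : A s * V s = (ε • H' (ε * s)) * U s := by
      rw [hAdef, hVdef]
      simp only [smul_mul_assoc]
      congr 1
      rw [mul_assoc, ← mul_assoc ((H (ε * s))⁻¹), Matrix.nonsing_inv_mul _ (hdet _), one_mul]
    have e2 : (-Complex.I) • (H (ε * s) * V s) = H (ε * s) * U' s := by
      rw [hU' s, mul_smul_comm]
    rw [e1, e2]
    exact h0
  -- reduce to a vector estimate
  have hexp0 : (0:ℝ) ≤ Real.exp (α * ε * (t - t₀)) := Real.exp_nonneg _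
  rw [Matrix.l2_opNorm_def]
  apply ContinuousLinearMap.opNorm_le_bound _ hexp0
  intro x
  show ‖(WithLp.equiv 2 (Fin n → ℂ)).symm
      ((H (ε * t) * U t * (H (ε * t₀))⁻¹) *ᵥ (WithLp.equiv 2 (Fin n → ℂ)) x)‖
    ≤ Real.exp (α * ε * (t - t₀)) * ‖x‖
  set y : Fin n → ℂ := (WithLp.equiv 2 (Fin n → ℂ)) x with hy
  set x₀ : Fin n → ℂ := (H (ε * t₀))⁻¹ *ᵥ y with hx₀
  let L : Matrix (Fin n) (Fin n) ℂ →ₗ[ℂ] EuclideanSpace ℂ (Fin n) :=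
    { toFun := fun M => (WithLp.equiv 2 (Fin n → ℂ)).symm (M *ᵥ x₀)
      map_add' := fun M N => by ext i; simp [Matrix.add_mulVec]
      map_smul' := fun cc M => by ext i; simp [Matrix.smul_mulVec] }
  let Lc : Matrix (Fin n) (Fin n) ℂ →L[ℂ] EuclideanSpace ℂ (Fin n) :=
    LinearMap.toContinuousLinearMap L
  set ψ : ℝ → EuclideanSpace ℂ (Fin n) := fun s => Lc (V s) with hψdef
  have hψvec : ∀ s, ψ s = (WithLp.equiv 2 (Fin n → ℂ)).symm (V s *ᵥ x₀) := fun s => rfl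
  have hψ : ∀ s, HasDerivAt ψ (Lc (A s * V s + (-Complex.I) • (H (ε * s) * V s))) s := by
    intro s
    have := ((Lc.restrictScalars ℝ).hasFDerivAt (x := V s)).comp_hasDerivAt s (hV s)
    exact this
  set φ : ℝ → ℝ := fun s => RCLike.re (K := ℂ) (inner ℂ (ψ s) (ψ s)) with hφdef
  have hφsq : ∀ s, φ s = ‖ψ s‖ ^ 2 := fun s => inner_self_eq_norm_sq (ψ s)
  set D : ℝ → EuclideanSpace ℂ (Fin n) :=
    fun s => Lc (A s * V s + (-Complex.I) • (H (ε * s) * V s)) with hD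
  have hφ : ∀ s, HasDerivAt φ
      (RCLike.re (K := ℂ) ((inner ℂ (ψ s) (D s) : ℂ) + inner ℂ (D s) (ψ s))) s := by
    intro s
    have hi := HasDerivAt.inner ℂ (hψ s) (hψ s)
    exact (RCLike.reCLM (K := ℂ)).hasFDerivAt.comp_hasDerivAt s hi
  -- the crucial derivative bound
  have hkey : ∀ s, RCLike.re (K := ℂ) ((inner ℂ (ψ s) (D s) : ℂ) + inner ℂ (D s) (ψ s))
      ≤ 2 * c * φ s := by
    intro s
    set w : Fin n → ℂ := V s *ᵥ x₀ with hw
    have hψw : ψ s = (WithLp.equiv 2 (Fin n → ℂ)).symm w := rfl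
    have ha : Lc (A s * V s) = (WithLp.equiv 2 (Fin n → ℂ)).symm (A s *ᵥ w) := by
      show (WithLp.equiv 2 (Fin n → ℂ)).symm ((A s * V s) *ᵥ x₀) = _
      rw [← Matrix.mulVec_mulVec]
    have hu : Lc (H (ε * s) * V s) = (WithLp.equiv 2 (Fin n → ℂ)).symm (H (ε * s) *ᵥ w) := by
      show (WithLp.equiv 2 (Fin n → ℂ)).symm ((H (ε * s) * V s) *ᵥ x₀) = _
      rw [← Matrix.mulVec_mulVec]
    have hDsplit : D s = Lc (A s * V s) + (-Complex.I) • Lc (H (ε * s) * V s) := by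
      rw [hD]; simp only [map_add, _root_.map_smul]
    have hreal : (inner ℂ (ψ s) (Lc (H (ε * s) * V s)) : ℂ).im = 0 := by
      have hz : (inner ℂ (ψ s) (Lc (H (ε * s) * V s)) : ℂ) = star w ⬝ᵥ (H (ε * s) *ᵥ w) := by
        rw [hψw, hu, PiLp.inner_apply]
        refine Finset.sum_congr rfl fun i _ => ?_
        simp [RCLike.inner_apply, mul_comm]
      have e1 : star w ⬝ᵥ (H (ε * s) *ᵥ w) = star (star (H (ε * s) *ᵥ w) ⬝ᵥ w) := by
        rw [← Matrix.star_dotProduct_star, star_star]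
      have e2 : star (H (ε * s) *ᵥ w) ⬝ᵥ w = star w ⬝ᵥ (H (ε * s) *ᵥ w) := by
        rw [Matrix.star_mulVec, (hHherm (ε * s)), ← Matrix.dotProduct_mulVec]
      have : (starRingEnd ℂ) ((inner ℂ (ψ s) (Lc (H (ε * s) * V s)) : ℂ))
          = (inner ℂ (ψ s) (Lc (H (ε * s) * V s)) : ℂ) := by
        rw [hz]
        conv_lhs => rw [e1]
        rw [← Complex.star_def, star_star, e2]
      exact (Complex.conj_eq_iff_im).mp this
    have hbnd : RCLike.re (K := ℂ) (inner ℂ (ψ s) (D s) : ℂ) ≤ c * φ s := by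
      rw [hDsplit, inner_add_right, inner_smul_right, map_add]
      have h2 : RCLike.re (K := ℂ)
          ((-Complex.I) * (inner ℂ (ψ s) (Lc (H (ε * s) * V s)) : ℂ)) = 0 := by
        have hgen : ∀ z : ℂ, z.im = 0 → (-Complex.I * z).re = 0 := by
          intro z hz0; simp [Complex.mul_re, hz0]
        exact hgen _ hreal
      have h1 : RCLike.re (K := ℂ) (inner ℂ (ψ s) (Lc (A s * V s)) : ℂ) ≤ c * φ s := by
        have hnorm : ‖Lc (A s * V s)‖ ≤ c * ‖ψ s‖ := by
          rw [ha]
          calc ‖(WithLp.equiv 2 (Fin n → ℂ)).symm (A s *ᵥ w)‖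
              ≤ ‖A s‖ * ‖(WithLp.equiv 2 (Fin n → ℂ)).symm w‖ :=
                Matrix.l2_opNorm_mulVec (A s) ((WithLp.equiv 2 (Fin n → ℂ)).symm w)
            _ ≤ c * ‖ψ s‖ := by
                rw [← hψw]
                exact mul_le_mul_of_nonneg_right (hAnorm s) (norm_nonneg _)
        calc RCLike.re (K := ℂ) (inner ℂ (ψ s) (Lc (A s * V s)) : ℂ)
            ≤ ‖(inner ℂ (ψ s) (Lc (A s * V s)) : ℂ)‖ := RCLike.re_le_norm _
          _ ≤ ‖ψ s‖ * ‖Lc (A s * V s)‖ := norm_inner_le_norm _ _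
          _ ≤ ‖ψ s‖ * (c * ‖ψ s‖) :=
              mul_le_mul_of_nonneg_left hnorm (norm_nonneg _)
          _ = c * φ s := by rw [hφsq s]; ring
      linarith [h1, h2, le_of_eq h2]
    have hsum : RCLike.re (K := ℂ) ((inner ℂ (ψ s) (D s) : ℂ) + inner ℂ (D s) (ψ s))
        = 2 * RCLike.re (K := ℂ) (inner ℂ (ψ s) (D s) : ℂ) := by
      rw [← inner_conj_symm (ψ s) (D s)]
      simp only [map_add, RCLike.re_to_complex, Complex.add_re, Complex.conj_re]
      ring
    rw [hsum]
    linarith [hbnd]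
  -- Gronwall argument
  have hgexp : ∀ s : ℝ, HasDerivAt (fun r : ℝ => Real.exp (-(2*c)*r))
      (Real.exp (-(2*c)*s) * (-(2*c))) s := by
    intro s
    have h1 : HasDerivAt (fun r : ℝ => -(2*c)*r) (-(2*c)) s := by
      simpa using (hasDerivAt_id s).const_mul (-(2*c))
    exact h1.exp
  set g : ℝ → ℝ := fun s => φ s * Real.exp (-(2*c)*s) with hg
  have hgderiv : ∀ s, HasDerivAt g
      (RCLike.re (K := ℂ) ((inner ℂ (ψ s) (D s) : ℂ) + inner ℂ (D s) (ψ s)) * Real.exp (-(2*c)*s)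
        + φ s * (Real.exp (-(2*c)*s) * (-(2*c)))) s := fun s => (hφ s).mul (hgexp s)
  have hmono : Antitone g := by
    apply antitone_of_deriv_nonpos
    · exact fun s => ((hgderiv s).differentiableAt)
    · intro s
      rw [(hgderiv s).deriv]
      nlinarith [mul_le_mul_of_nonneg_right (hkey s) (Real.exp_nonneg (-(2*c)*s)),
        Real.exp_pos (-(2*c)*s)]
  have hφt : φ t ≤ φ t₀ * Real.exp (2*c*(t - t₀)) := by
    have h1 : g t ≤ g t₀ := hmono ht
    have e1 : φ t = g t * Real.exp (2*c*t) := by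
      show φ t = φ t * Real.exp (-(2*c)*t) * Real.exp (2*c*t)
      rw [mul_assoc, ← Real.exp_add]
      have : -(2*c)*t + 2*c*t = 0 := by ring
      rw [this, Real.exp_zero, mul_one]
    have e2 : φ t₀ * Real.exp (2*c*(t - t₀)) = g t₀ * Real.exp (2*c*t) := by
      show φ t₀ * Real.exp (2*c*(t - t₀)) = φ t₀ * Real.exp (-(2*c)*t₀) * Real.exp (2*c*t)
      rw [mul_assoc (φ t₀), ← Real.exp_add]
      congr 2
      ring
    rw [e1, e2]
    exact mul_le_mul_of_nonneg_right h1 (Real.exp_nonneg _)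
  have hψt₀ : ψ t₀ = x := by
    have hv : V t₀ *ᵥ x₀ = y := by
      show (H (ε * t₀) * U t₀) *ᵥ ((H (ε * t₀))⁻¹ *ᵥ y) = y
      rw [hU0, mul_one, Matrix.mulVec_mulVec, Matrix.mul_nonsing_inv _ (hdet _),
        Matrix.one_mulVec]
    rw [hψvec, hv]
    exact (WithLp.equiv 2 (Fin n → ℂ)).symm_apply_apply x
  have hψt : ψ t = (WithLp.equiv 2 (Fin n → ℂ)).symm
      ((H (ε * t) * U t * (H (ε * t₀))⁻¹) *ᵥ y) := by
    rw [hψvec]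
    congr 1
    show (H (ε * t) * U t) *ᵥ ((H (ε * t₀))⁻¹ *ᵥ y) = _
    rw [Matrix.mulVec_mulVec]
  have hfin : ‖ψ t‖^2 ≤ (Real.exp (α*ε*(t-t₀)) * ‖x‖)^2 := by
    rw [← hφsq]
    calc φ t ≤ φ t₀ * Real.exp (2*c*(t-t₀)) := hφt
      _ = (Real.exp (α*ε*(t-t₀)) * ‖x‖)^2 := by
          rw [hφsq, hψt₀]
          have hsq : (Real.exp (α*ε*(t-t₀)))^2 = Real.exp (2*c*(t-t₀)) := by
            rw [sq, ← Real.exp_add]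
            congr 1
            rw [hc]; ring
          rw [mul_pow, hsq]; ring
  have hfin2 := Real.sqrt_le_sqrt hfin
  rw [Real.sqrt_sq (norm_nonneg _), Real.sqrt_sq (by positivity)] at hfin2
  rw [← hψt]
  exact hfin2
end

section
/- For θ ∈ ℝ let u₊(θ) = (1/√2)·(1, e^{iθ}) and u₋(θ) = (1/√2)·(-e^{-iθ}, 1) in ℂ², and let σ₁ = !![0, 1; 1, 0] and σ₂ = !![0, -i; i, 0] be the first two Pauli matrices. Then for every ω ∈ ℝ and every pair of indices i, j ∈ {1, 2}: ∫₀^{2π} [ (e^{iω} - 1)·⟨u₋(θ), σⱼ·u₊(θ)⟩·⟨u₊(θ), σᵢ·u₋(θ)⟩ - conj( (e^{iω} - 1)·⟨u₋(θ), σⱼ·u₊(θ)⟩·⟨u₊(θ), σᵢ·u₋(θ)⟩ ) ] dθ equals 2·π·i·sin(ω) if i = j and 0 if i ≠ j. -/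
open Matrix

/-- Eigenvector `u₊(θ) = (1/√2)·(1, e^{iθ})` of the Dirac Hamiltonian at angle `θ`. -/
noncomputable def uPlus (θ : ℝ) : Fin 2 → ℂ :=
  ![1 / Real.sqrt 2, Complex.exp (Complex.I * θ) / Real.sqrt 2]

/-- Eigenvector `u₋(θ) = (1/√2)·(-e^{-iθ}, 1)` of the Dirac Hamiltonian at angle `θ`. -/
noncomputable def uMinus (θ : ℝ) : Fin 2 → ℂ :=
  ![-Complex.exp (-Complex.I * θ) / Real.sqrt 2, 1 / Real.sqrt 2]

/-- The first two Pauli matrices `σ₁, σ₂`. -/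
noncomputable def pauli : Fin 2 → Matrix (Fin 2) (Fin 2) ℂ :=
  ![!![0, 1; 1, 0], !![0, -Complex.I; Complex.I, 0]]


local notation "X" θ => Complex.exp (Complex.I * (θ:ℝ))
local notation "Z" θ => Complex.exp (-(Complex.I * (θ:ℝ)))

lemma hs2 : (Real.sqrt 2 : ℂ) ^ 2 = 2 := by
  norm_cast; rw [Real.sq_sqrt] <;> norm_num

lemma hs0 : (Real.sqrt 2 : ℂ) ≠ 0 := by
  intro h; have := hs2; rw [h] at this; norm_num at this

lemma hs4 : (Real.sqrt 2 : ℂ) ^ 4 = 4 := by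
  rw [show (4:ℕ) = 2*2 from rfl, pow_mul, hs2]; norm_num

lemma hxz (θ : ℝ) : (X θ) * (Z θ) = 1 := by
  rw [← Complex.exp_add]
  ring_nf
  exact Complex.exp_zero

lemma ipA (θ : ℝ) : star (uMinus θ) ⬝ᵥ (pauli 0 *ᵥ uPlus θ) = (1 - (X θ)^2)/2 := by
  simp only [uPlus, uMinus, pauli, Matrix.mulVec, dotProduct, Fin.sum_univ_two,
    Matrix.cons_val_zero, Matrix.cons_val_one, Matrix.head_cons, Pi.star_apply,
    Matrix.cons_val', Matrix.empty_val', Matrix.cons_val_fin_one, Matrix.head_fin_const,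
    Matrix.of_apply, star_div₀, star_one, star_neg, RCLike.star_def, _root_.map_mul,
    _root_.map_sub, map_div₀, map_neg, Complex.conj_I, Complex.conj_ofReal,
    neg_mul, ← Complex.exp_conj]
  field_simp
  ring_nf
  simp only [hs2, hs4, map_one]
  try ring

lemma ipB (θ : ℝ) : star (uPlus θ) ⬝ᵥ (pauli 0 *ᵥ uMinus θ) = (1 - (Z θ)^2)/2 := by
  simp only [uPlus, uMinus, pauli, Matrix.mulVec, dotProduct, Fin.sum_univ_two,
    Matrix.cons_val_zero, Matrix.cons_val_one, Matrix.head_cons, Pi.star_apply,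
    Matrix.cons_val', Matrix.empty_val', Matrix.cons_val_fin_one, Matrix.head_fin_const,
    Matrix.of_apply, star_div₀, star_one, star_neg, RCLike.star_def, _root_.map_mul,
    _root_.map_sub, map_div₀, map_neg, Complex.conj_I, Complex.conj_ofReal,
    neg_mul, ← Complex.exp_conj]
  field_simp
  ring_nf
  simp only [hs2, hs4, map_one]
  try ring

lemma ipC (θ : ℝ) : star (uMinus θ) ⬝ᵥ (pauli 1 *ᵥ uPlus θ) = Complex.I*(1 + (X θ)^2)/2 := by
  simp only [uPlus, uMinus, pauli, Matrix.mulVec, dotProduct, Fin.sum_univ_two,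
    Matrix.cons_val_zero, Matrix.cons_val_one, Matrix.head_cons, Pi.star_apply,
    Matrix.cons_val', Matrix.empty_val', Matrix.cons_val_fin_one, Matrix.head_fin_const,
    Matrix.of_apply, star_div₀, star_one, star_neg, RCLike.star_def, _root_.map_mul,
    _root_.map_sub, map_div₀, map_neg, Complex.conj_I, Complex.conj_ofReal,
    neg_mul, ← Complex.exp_conj]
  field_simp
  ring_nf
  simp only [hs2, hs4, map_one]
  try ring

lemma ipD (θ : ℝ) : star (uPlus θ) ⬝ᵥ (pauli 1 *ᵥ uMinus θ) = -Complex.I*(1 + (Z θ)^2)/2 := by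
  simp only [uPlus, uMinus, pauli, Matrix.mulVec, dotProduct, Fin.sum_univ_two,
    Matrix.cons_val_zero, Matrix.cons_val_one, Matrix.head_cons, Pi.star_apply,
    Matrix.cons_val', Matrix.empty_val', Matrix.cons_val_fin_one, Matrix.head_fin_const,
    Matrix.of_apply, star_div₀, star_one, star_neg, RCLike.star_def, _root_.map_mul,
    _root_.map_sub, map_div₀, map_neg, Complex.conj_I, Complex.conj_ofReal,
    neg_mul, ← Complex.exp_conj]
  field_simp
  ring_nf
  simp only [hs2, hs4, map_one]
  try ring

lemma hS (ω : ℝ) : (Real.sin ω : ℂ)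
    = -Complex.I * (Complex.exp (Complex.I * ω) - Complex.exp (-(Complex.I * ω))) / 2 := by
  rw [Complex.ofReal_sin, Complex.sin]
  ring_nf

lemma e2 (θ : ℝ) : Complex.exp ((2*Complex.I)*θ) = (X θ)^2 := by
  rw [← Complex.exp_nat_mul]; ring_nf

lemma e3 (θ : ℝ) : Complex.exp ((-2*Complex.I)*θ) = (Z θ)^2 := by
  rw [← Complex.exp_nat_mul]; ring_nf

lemma pt00 (ω θ : ℝ) :
    ((Complex.exp (Complex.I * ω) - 1) *
          (star (uMinus θ) ⬝ᵥ (pauli 0 *ᵥ uPlus θ)) *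
          (star (uPlus θ) ⬝ᵥ (pauli 0 *ᵥ uMinus θ)) -
        (starRingEnd ℂ)
          ((Complex.exp (Complex.I * ω) - 1) *
            (star (uMinus θ) ⬝ᵥ (pauli 0 *ᵥ uPlus θ)) *
            (star (uPlus θ) ⬝ᵥ (pauli 0 *ᵥ uMinus θ))))
    = Complex.I * Real.sin ω + (-(Complex.I * Real.sin ω)/2) * Complex.exp ((2*Complex.I)*θ)
        + (-(Complex.I * Real.sin ω)/2) * Complex.exp ((-2*Complex.I)*θ) := by
  rw [ipA, ipB, e2, e3, hS]
  simp only [_root_.map_mul, _root_.map_sub, _root_.map_one, map_div₀, map_neg, map_pow,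
    map_ofNat, Complex.conj_I, Complex.conj_ofReal, neg_mul, ← Complex.exp_conj, neg_neg]
  set x := X θ
  set z := Z θ
  set y := Complex.exp (Complex.I * (ω:ℝ))
  set w := Complex.exp (-(Complex.I * (ω:ℝ)))
  linear_combination ((y-w)/4*(x*z+1)) * hxz θ
    + ((y-w)/2*(1-x^2/2-z^2/2)) * Complex.I_mul_I

lemma pt11 (ω θ : ℝ) :
    ((Complex.exp (Complex.I * ω) - 1) *
          (star (uMinus θ) ⬝ᵥ (pauli 1 *ᵥ uPlus θ)) *
          (star (uPlus θ) ⬝ᵥ (pauli 1 *ᵥ uMinus θ)) -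
        (starRingEnd ℂ)
          ((Complex.exp (Complex.I * ω) - 1) *
            (star (uMinus θ) ⬝ᵥ (pauli 1 *ᵥ uPlus θ)) *
            (star (uPlus θ) ⬝ᵥ (pauli 1 *ᵥ uMinus θ))))
    = Complex.I * Real.sin ω + ((Complex.I * Real.sin ω)/2) * Complex.exp ((2*Complex.I)*θ)
        + ((Complex.I * Real.sin ω)/2) * Complex.exp ((-2*Complex.I)*θ) := by
  rw [ipC, ipD, e2, e3, hS]
  simp only [_root_.map_mul, _root_.map_sub, _root_.map_one, map_div₀, map_neg, map_pow,
    map_ofNat, _root_.map_add, Complex.conj_I, Complex.conj_ofReal, neg_mul,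
    ← Complex.exp_conj, neg_neg]
  set x := X θ
  set z := Z θ
  set y := Complex.exp (Complex.I * (ω:ℝ))
  set w := Complex.exp (-(Complex.I * (ω:ℝ)))
  linear_combination ((y-w)/4*(x*z+1)) * hxz θ
    - ((y-w)/4*(x^2*z^2-1)) * Complex.I_mul_I

lemma pt01 (ω θ : ℝ) :
    ((Complex.exp (Complex.I * ω) - 1) *
          (star (uMinus θ) ⬝ᵥ (pauli 1 *ᵥ uPlus θ)) *
          (star (uPlus θ) ⬝ᵥ (pauli 0 *ᵥ uMinus θ)) -
        (starRingEnd ℂ)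
          ((Complex.exp (Complex.I * ω) - 1) *
            (star (uMinus θ) ⬝ᵥ (pauli 1 *ᵥ uPlus θ)) *
            (star (uPlus θ) ⬝ᵥ (pauli 0 *ᵥ uMinus θ))))
    = 0 + (-(Real.sin ω : ℂ)/2) * Complex.exp ((2*Complex.I)*θ)
        + ((Real.sin ω : ℂ)/2) * Complex.exp ((-2*Complex.I)*θ) := by
  rw [ipC, ipB, e2, e3, hS]
  simp only [_root_.map_mul, _root_.map_sub, _root_.map_one, map_div₀, map_neg, map_pow,
    map_ofNat, _root_.map_add, Complex.conj_I, Complex.conj_ofReal, neg_mul,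
    ← Complex.exp_conj, neg_neg]
  set x := X θ
  set z := Z θ
  set y := Complex.exp (Complex.I * (ω:ℝ))
  set w := Complex.exp (-(Complex.I * (ω:ℝ)))
  linear_combination (-Complex.I*(y+w-2)*(x*z+1)/4) * hxz θ

lemma pt10 (ω θ : ℝ) :
    ((Complex.exp (Complex.I * ω) - 1) *
          (star (uMinus θ) ⬝ᵥ (pauli 0 *ᵥ uPlus θ)) *
          (star (uPlus θ) ⬝ᵥ (pauli 1 *ᵥ uMinus θ)) -
        (starRingEnd ℂ)
          ((Complex.exp (Complex.I * ω) - 1) *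
            (star (uMinus θ) ⬝ᵥ (pauli 0 *ᵥ uPlus θ)) *
            (star (uPlus θ) ⬝ᵥ (pauli 1 *ᵥ uMinus θ))))
    = 0 + (-(Real.sin ω : ℂ)/2) * Complex.exp ((2*Complex.I)*θ)
        + ((Real.sin ω : ℂ)/2) * Complex.exp ((-2*Complex.I)*θ) := by
  rw [ipA, ipD, e2, e3, hS]
  simp only [_root_.map_mul, _root_.map_sub, _root_.map_one, map_div₀, map_neg, map_pow,
    map_ofNat, _root_.map_add, Complex.conj_I, Complex.conj_ofReal, neg_mul,
    ← Complex.exp_conj, neg_neg]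
  set x := X θ
  set z := Z θ
  set y := Complex.exp (Complex.I * (ω:ℝ))
  set w := Complex.exp (-(Complex.I * (ω:ℝ)))
  linear_combination (Complex.I*(y+w-2)*(x*z+1)/4) * hxz θ

lemma int_exp (c : ℂ) (hc : c ≠ 0) (hone : Complex.exp (c * (2 * Real.pi)) = 1) :
    (∫ θ in (0:ℝ)..(2 * Real.pi), Complex.exp (c * θ)) = 0 := by
  rw [integral_exp_mul_complex hc]
  simp [hone]

lemma integ (A B C : ℂ) :
    (∫ θ in (0:ℝ)..(2 * Real.pi),
      (A + B * Complex.exp ((2*Complex.I) * θ) + C * Complex.exp ((-2*Complex.I) * θ)))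
    = (2 * Real.pi) * A := by
  have hcont : ∀ c : ℂ, Continuous (fun θ : ℝ => Complex.exp (c * θ)) := fun c =>
    Complex.continuous_exp.comp (continuous_const.mul Complex.continuous_ofReal)
  have hint : ∀ c d : ℂ, IntervalIntegrable (fun θ : ℝ => d * Complex.exp (c * θ))
      MeasureTheory.volume 0 (2 * Real.pi) := fun c d =>
    (continuous_const.mul (hcont c)).intervalIntegrable _ _
  have h1 : Complex.exp ((2*Complex.I) * (2 * Real.pi)) = 1 := by
    have := Complex.exp_int_mul_two_pi_mul_I 2
    rw [show ((2:ℤ):ℂ) * (2 * Real.pi * Complex.I) = (2*Complex.I) * (2*Real.pi) by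
      push_cast; ring] at this
    exact this
  have h2 : Complex.exp ((-2*Complex.I) * (2 * Real.pi)) = 1 := by
    have := Complex.exp_int_mul_two_pi_mul_I (-2)
    rw [show ((-2:ℤ):ℂ) * (2 * Real.pi * Complex.I) = (-2*Complex.I) * (2*Real.pi) by
      push_cast; ring] at this
    exact this
  have hB : (∫ θ in (0:ℝ)..(2 * Real.pi), B * Complex.exp ((2*Complex.I) * θ)) = 0 := by
    rw [intervalIntegral.integral_const_mul, int_exp _ (by simp [Complex.I_ne_zero]) h1,
      mul_zero]
  have hC : (∫ θ in (0:ℝ)..(2 * Real.pi), C * Complex.exp ((-2*Complex.I) * θ)) = 0 := by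
    rw [intervalIntegral.integral_const_mul, int_exp _ (by simp [Complex.I_ne_zero]) h2,
      mul_zero]
  rw [intervalIntegral.integral_add (((continuous_const (y := A)).intervalIntegrable 0 (2*Real.pi)).add
      (hint _ B)) (hint _ C),
    intervalIntegral.integral_add ((continuous_const (y := A)).intervalIntegrable 0 (2*Real.pi)) (hint _ B),
    hB, hC, intervalIntegral.integral_const]
  simp
  try ring


/-- The angular integral at a Dirac cone: the off-diagonal current–current correlation
integrates over the circle to `2·π·i·sin(ω)·δ_{ij}`.  Here `⟨x, y⟩ = star x ⬝ᵥ y` is the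
standard inner product on `ℂ²`, conjugate-linear in the first argument. -/
theorem stmt_11 (ω : ℝ) (i j : Fin 2) :
    (∫ θ in (0:ℝ)..(2 * Real.pi),
      ((Complex.exp (Complex.I * ω) - 1) *
          (star (uMinus θ) ⬝ᵥ (pauli j *ᵥ uPlus θ)) *
          (star (uPlus θ) ⬝ᵥ (pauli i *ᵥ uMinus θ)) -
        (starRingEnd ℂ)
          ((Complex.exp (Complex.I * ω) - 1) *
            (star (uMinus θ) ⬝ᵥ (pauli j *ᵥ uPlus θ)) *
            (star (uPlus θ) ⬝ᵥ (pauli i *ᵥ uMinus θ)))))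
      = if i = j then 2 * Real.pi * Complex.I * Real.sin ω else 0 := by
  fin_cases i <;> fin_cases j <;> simp only [Fin.mk_zero, Fin.mk_one, if_true, if_false]
  · rw [intervalIntegral.integral_congr (g := fun θ =>
      Complex.I * Real.sin ω + (-(Complex.I * Real.sin ω)/2) * Complex.exp ((2*Complex.I)*θ)
        + (-(Complex.I * Real.sin ω)/2) * Complex.exp ((-2*Complex.I)*θ))
      (fun θ _ => pt00 ω θ), integ]
    simp
    ring
  · rw [intervalIntegral.integral_congr (g := fun θ =>
      0 + (-(Real.sin ω : ℂ)/2) * Complex.exp ((2*Complex.I)*θ)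
        + ((Real.sin ω : ℂ)/2) * Complex.exp ((-2*Complex.I)*θ))
      (fun θ _ => pt01 ω θ), integ]
    simp
  · rw [intervalIntegral.integral_congr (g := fun θ =>
      0 + (-(Real.sin ω : ℂ)/2) * Complex.exp ((2*Complex.I)*θ)
        + ((Real.sin ω : ℂ)/2) * Complex.exp ((-2*Complex.I)*θ))
      (fun θ _ => pt10 ω θ), integ]
    simp
  · rw [intervalIntegral.integral_congr (g := fun θ =>
      Complex.I * Real.sin ω + ((Complex.I * Real.sin ω)/2) * Complex.exp ((2*Complex.I)*θ)
        + ((Complex.I * Real.sin ω)/2) * Complex.exp ((-2*Complex.I)*θ))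
      (fun θ _ => pt11 ω θ), integ]
    simp
    ring
end

section
/- Let n ≥ 1, let H and K be positive definite Hermitian matrices in Matrix (Fin n) (Fin n) ℂ, let U be a matrix with ‖U‖ ≤ 1, and let C ≥ 0 with ‖K·U·H⁻¹‖ ≤ C. Then ‖K^{1/2}·U·H^{-1/2}‖ ≤ √C, where K^{1/2} and H^{1/2} denote the positive semidefinite square roots of K and H. -/
open Matrix
open scoped Matrix.Norms.L2Operator ComplexOrder

/-- The positive semidefinite square root of a positive semidefinite matrix
(the Mathlib definition of December 2024, since removed from Mathlib). -/
noncomputable def Matrix.PosSemidef.sqrt {n 𝕜 : Type*} [Fintype n] [RCLike 𝕜] [DecidableEq n]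
    {A : Matrix n n 𝕜} (hA : A.PosSemidef) : Matrix n n 𝕜 :=
  hA.1.eigenvectorUnitary.1 * diagonal ((↑) ∘ (·.sqrt) ∘ hA.1.eigenvalues) *
  (star hA.1.eigenvectorUnitary : Matrix n n 𝕜)

lemma Matrix.PosSemidef.posSemidef_sqrt {n 𝕜 : Type*} [Fintype n] [RCLike 𝕜] [DecidableEq n]
    {A : Matrix n n 𝕜} (hA : A.PosSemidef) : hA.sqrt.PosSemidef := by
  unfold Matrix.PosSemidef.sqrt
  rw [Matrix.star_eq_conjTranspose]
  refine Matrix.PosSemidef.mul_mul_conjTranspose_same ?_ _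
  rw [Matrix.posSemidef_diagonal_iff]
  intro i
  exact RCLike.ofReal_nonneg.mpr (Real.sqrt_nonneg _)

lemma Matrix.PosSemidef.sqrt_mul_self {n 𝕜 : Type*} [Fintype n] [RCLike 𝕜] [DecidableEq n]
    {A : Matrix n n 𝕜} (hA : A.PosSemidef) : hA.sqrt * hA.sqrt = A := by
  have hU : (star hA.1.eigenvectorUnitary : Matrix n n 𝕜) * hA.1.eigenvectorUnitary.1 = 1 :=
    Unitary.coe_star_mul_self _
  have hD : diagonal ((↑) ∘ (·.sqrt) ∘ hA.1.eigenvalues : n → 𝕜) *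
      diagonal ((↑) ∘ (·.sqrt) ∘ hA.1.eigenvalues) = diagonal (RCLike.ofReal ∘ hA.1.eigenvalues) := by
    rw [diagonal_mul_diagonal]; congr 1; funext i; simp only [Function.comp_apply]
    rw [← RCLike.ofReal_mul, Real.mul_self_sqrt (hA.eigenvalues_nonneg i)]
  conv_rhs => rw [hA.1.spectral_theorem, Unitary.conjStarAlgAut_apply]
  unfold Matrix.PosSemidef.sqrt
  calc _ = hA.1.eigenvectorUnitary.1 * (diagonal ((↑) ∘ (·.sqrt) ∘ hA.1.eigenvalues : n → 𝕜) *
      ((star hA.1.eigenvectorUnitary : Matrix n n 𝕜) * hA.1.eigenvectorUnitary.1) *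
      diagonal ((↑) ∘ (·.sqrt) ∘ hA.1.eigenvalues)) *
      (star hA.1.eigenvectorUnitary : Matrix n n 𝕜) := by simp only [Matrix.mul_assoc]
    _ = _ := by rw [hU, Matrix.mul_one, hD]

noncomputable instance matrixCStarAlgebra (n : ℕ) : CStarAlgebra (Matrix (Fin n) (Fin n) ℂ) := Matrix.instCStarAlgebra

lemma specRad_mul_le' {A : Type*} [CStarAlgebra A] (a b : A) :
    spectralRadius ℂ (a * b) ≤ spectralRadius ℂ (b * a) := by
  simp only [spectralRadius]
  refine iSup₂_le fun k hk => ?_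
  rcases eq_or_ne k 0 with rfl | h
  · simp
  · have hk' : k ∈ spectrum ℂ (b * a) := by
      have heq : spectrum ℂ (a * b) \ {0} = spectrum ℂ (b * a) \ {0} := spectrum.nonzero_mul_comm a b
      have hmem : k ∈ spectrum ℂ (a * b) \ {0} := ⟨hk, h⟩
      rw [heq] at hmem
      exact hmem.1
    exact le_iSup₂ (α := ENNReal) k hk'

lemma nnnorm_sq_le_of_star_mul_self_eq {A : Type*} [CStarAlgebra A] [Nontrivial A]
    (t x y : A) (h : star t * t = x * y) :
    ‖t‖₊ * ‖t‖₊ ≤ ‖y * x‖₊ := by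
  have key : (‖t‖₊ * ‖t‖₊ : ENNReal) ≤ (‖y * x‖₊ : ENNReal) := by
    calc (‖t‖₊ * ‖t‖₊ : ENNReal) = (‖star t * t‖₊ : ENNReal) := by
          rw [CStarRing.nnnorm_star_mul_self]; push_cast; ring
      _ = spectralRadius ℂ (star t * t) :=
          ((IsSelfAdjoint.star_mul_self t).spectralRadius_eq_nnnorm).symm
      _ = spectralRadius ℂ (x * y) := by rw [h]
      _ ≤ spectralRadius ℂ (y * x) := specRad_mul_le' x y
      _ ≤ (‖y * x‖₊ : ENNReal) := spectrum.spectralRadius_le_nnnorm _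
  exact_mod_cast key

/-- Heinz-type interpolation inequality: if `H, K` are positive definite, `‖U‖ ≤ 1` and
`‖K·U·H⁻¹‖ ≤ C`, then `‖K^{1/2}·U·H^{-1/2}‖ ≤ √C` (ℓ²-operator norm). -/
theorem stmt_19 (n : ℕ) (hn : 1 ≤ n) (H K U : Matrix (Fin n) (Fin n) ℂ)
    (hH : H.PosDef) (hK : K.PosDef) (C : ℝ) (hC : 0 ≤ C)
    (hU : ‖U‖ ≤ 1) (hKUH : ‖K * U * H⁻¹‖ ≤ C) :
    ‖hK.posSemidef.sqrt * U * (hH.posSemidef.sqrt)⁻¹‖ ≤ Real.sqrt C := by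
  haveI : Nonempty (Fin n) := ⟨⟨0, hn⟩⟩
  set S := hK.posSemidef.sqrt with hS
  set R := hH.posSemidef.sqrt with hR
  have hSh : Sᴴ = S := hK.posSemidef.posSemidef_sqrt.isHermitian
  have hRh : Rᴴ = R := hH.posSemidef.posSemidef_sqrt.isHermitian
  have hSS : S * S = K := hK.posSemidef.sqrt_mul_self
  have hRR : R * R = H := hH.posSemidef.sqrt_mul_self
  have hRih : (R⁻¹)ᴴ = R⁻¹ := by rw [Matrix.conjTranspose_nonsing_inv, hRh]
  have hRRi : R⁻¹ * R⁻¹ = H⁻¹ := by rw [← hRR, Matrix.mul_inv_rev]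
  set T := S * U * R⁻¹ with hT
  have key := nnnorm_sq_le_of_star_mul_self_eq T (R⁻¹) (Uᴴ * K * U * R⁻¹) (by
    show Tᴴ * T = R⁻¹ * (Uᴴ * K * U * R⁻¹)
    simp only [hT, Matrix.conjTranspose_mul, hRih, hSh, ← hSS]
    noncomm_ring)
  have hswap : Uᴴ * K * U * R⁻¹ * R⁻¹ = Uᴴ * (K * U * H⁻¹) := by
    rw [← hRRi]; noncomm_ring
  have key2 : ‖Uᴴ * K * U * R⁻¹ * R⁻¹‖₊ ≤ C.toNNReal := by
    rw [hswap]
    calc ‖Uᴴ * (K * U * H⁻¹)‖₊ ≤ ‖Uᴴ‖₊ * ‖K * U * H⁻¹‖₊ := Matrix.l2_opNNNorm_mul _ _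
      _ ≤ 1 * C.toNNReal := by
          apply mul_le_mul'
          · rw [Matrix.l2_opNNNorm_conjTranspose]
            exact (by exact_mod_cast hU : ‖U‖₊ ≤ 1)
          · rw [← NNReal.coe_le_coe]
            simpa [Real.coe_toNNReal _ hC] using hKUH
      _ = C.toNNReal := one_mul _
  have key' : ‖T‖ * ‖T‖ ≤ C := by
    have h3 : ‖T‖₊ * ‖T‖₊ ≤ C.toNNReal := le_trans key key2
    calc ‖T‖ * ‖T‖ = ((‖T‖₊ * ‖T‖₊ : NNReal) : ℝ) := by push_cast; rfl
      _ ≤ (C.toNNReal : ℝ) := by exact_mod_cast h3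
      _ = C := Real.coe_toNNReal _ hC
  have h1 : 0 ≤ ‖T‖ := norm_nonneg _
  nlinarith [Real.sq_sqrt hC, Real.sqrt_nonneg C]
end
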